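/- Let n, m, o be positive natural numbers, v : Fin m → ℝ, c : Fin n → Fin o → ℝ with c i t ≥ 0, w : Fin m → Fin o → ℝ, α : ℝ, and h : Fin n → Fin m → ℝ. Define f(S) = ∑_{j} (v j * ∑_{t} min(w j t, ∑_{i ∈ A_j(S)} c i t) + α * ∑_{i ∈ A_j(S)} h i j) for assignments S : Finset (Fin n × Fin m), where A_j(S) = {i | (i, j) ∈ S}. Then for every assignment S and every pair (i, j) ∉ S, the marginal gain of adding (i, j) equals the algorithm's gain formula: f(S ∪ {(i,j)}) − f(S) = v j * ∑_{t} min(c i t, max(0, w j t − ∑_{i' ∈ A_j(S)} c i' t)) + α * h i j. -/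

import Mathlib

open Finset

/-- The set of robots assigned to task `j` under assignment `S`. -/
def Assigned {n m : ℕ} (S : Finset (Fin n × Fin m)) (j : Fin m) : Finset (Fin n) :=
  Finset.univ.filter fun i => (i, j) ∈ S

/-- The team objective function. -/
def teamObj {n m o : ℕ} (v : Fin m → ℝ) (c : Fin n → Fin o → ℝ) (w : Fin m → Fin o → ℝ)
    (α : ℝ) (h : Fin n → Fin m → ℝ) (S : Finset (Fin n × Fin m)) : ℝ :=
  ∑ j, (v j * ∑ t, min (w j t) (∑ i ∈ Assigned S j, c i t)
        + α * ∑ i ∈ Assigned S j, h i j)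

theorem min_add_sub_min {G : Type*} [AddCommGroup G] [LinearOrder G] [IsOrderedAddMonoid G]
    (a s : G) {c : G} (hc : 0 ≤ c) :
    min a (s + c) - min a s = min c (max 0 (a - s)) := by
  rcases le_total a s with has | hsa
  · have : a ≤ s + c := has.trans (le_add_of_nonneg_right hc)
    simp [has, this, sub_nonpos.2 has, hc]
  · rcases le_total a (s + c) with hac | hca
    · have : a - s ≤ c := sub_le_iff_le_add'.2 hac
      simp [hsa, hac, this, sub_nonneg.2 hsa]
    · have : c ≤ a - s := le_sub_iff_add_le'.2 hca
      simp [hsa, hca, this, le_trans hc this]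

section Assigned

variable {n m : ℕ} {S : Finset (Fin n × Fin m)} {i : Fin n} {j j' : Fin m}

@[simp]
theorem mem_Assigned : i ∈ Assigned S j ↔ (i, j) ∈ S := by
  simp [Assigned]

theorem Assigned_union_singleton_self : Assigned (S ∪ {(i, j)}) j = insert i (Assigned S j) := by
  ext i'
  simp

theorem Assigned_union_singleton_of_ne (hj : j' ≠ j) :
    Assigned (S ∪ {(i, j)}) j' = Assigned S j' := by
  ext i'
  simp [hj]

end Assigned

theorem marginal_gain_formula_general {n m o : ℕ}
    (v : Fin m → ℝ)
    (c : Fin n → Fin o → ℝ) (hc : ∀ i t, 0 ≤ c i t)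
    (w : Fin m → Fin o → ℝ)
    (α : ℝ) (h : Fin n → Fin m → ℝ) :
    ∀ (S : Finset (Fin n × Fin m)) (i : Fin n) (j : Fin m), (i, j) ∉ S →
      teamObj v c w α h (S ∪ {(i, j)}) - teamObj v c w α h S =
        v j * ∑ t, min (c i t) (max 0 (w j t - ∑ i' ∈ Assigned S j, c i' t))
          + α * h i j := by
  intro S i j hij
  have hi : i ∉ Assigned S j := mt mem_Assigned.1 hij
  have gain_eq : ∑ t, min (c i t) (max 0 (w j t - ∑ i' ∈ Assigned S j, c i' t)) =
      ∑ t, min (w j t) (∑ i' ∈ insert i (Assigned S j), c i' t) -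
        ∑ t, min (w j t) (∑ i' ∈ Assigned S j, c i' t) := by
    rw [← sum_sub_distrib]
    refine sum_congr rfl fun t _ => ?_
    rw [sum_insert hi, add_comm, min_add_sub_min _ _ (hc i t)]
  unfold teamObj
  rw [← sum_sub_distrib, Fintype.sum_eq_single j fun j' hj' => by
    rw [Assigned_union_singleton_of_ne hj', sub_self]]
  rw [gain_eq, Assigned_union_singleton_self, sum_insert hi (f := fun i' => h i' j)]
  ring

theorem marginal_gain_formula {n m o : ℕ} (hn : 0 < n) (hm : 0 < m) (ho : 0 < o)
    (v : Fin m → ℝ)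
    (c : Fin n → Fin o → ℝ) (hc : ∀ i t, 0 ≤ c i t)
    (w : Fin m → Fin o → ℝ)
    (α : ℝ) (h : Fin n → Fin m → ℝ) :
    ∀ (S : Finset (Fin n × Fin m)) (i : Fin n) (j : Fin m), (i, j) ∉ S →
      teamObj v c w α h (S ∪ {(i, j)}) - teamObj v c w α h S =
        v j * ∑ t, min (c i t) (max 0 (w j t - ∑ i' ∈ Assigned S j, c i' t))
          + α * h i j :=
  marginal_gain_formula_general v c hc w α h
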